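/- arXiv:2507.15841 — 8 statements merged into one kernel-verified Lean document; each statement's English description precedes it below -/
import Mathlib

section
/- If 𝒥 = (J_i)_{i ∈ ℤ/2n} is an (n,2n)-juggling pattern, then R(𝒥) is again an (n,2n)-juggling pattern, and R(R(𝒥)) = 𝒥; in particular R is an involution on the set JP(n,2n) of (n,2n)-juggling patterns. -/
/-- A `(k,N)`-juggling pattern: a tuple, indexed by `ℤ/N`, of `k`-element subsets of
`{1,…,N}` such that `j ∈ J_i` and `j ≠ N` imply `j+1 ∈ J_(i+1)`. -/
def IsJP (k N : ℕ) (J : ZMod N → Finset ℕ) : Prop :=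
  (∀ i, J i ⊆ Finset.Icc 1 N) ∧ (∀ i, (J i).card = k) ∧
    ∀ i, ∀ j ∈ J i, j ≠ N → j + 1 ∈ J (i + 1)

/-- `R(J) = {1,…,2n} \ {2n+1-j : j ∈ J}`. -/
def Rset (n : ℕ) (J : Finset ℕ) : Finset ℕ :=
  Finset.Icc 1 (2*n) \ J.image (fun j => 2*n + 1 - j)

/-- `R(𝒥)_i = R(J_(-i))`. -/
def RJP (n : ℕ) (J : ZMod (2*n) → Finset ℕ) : ZMod (2*n) → Finset ℕ :=
  fun i => Rset n (J (-i))

lemma mem_Rset {n : ℕ} {J : Finset ℕ} (hJ : J ⊆ Finset.Icc 1 (2*n)) {j : ℕ} :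
    j ∈ Rset n J ↔ (1 ≤ j ∧ j ≤ 2*n) ∧ 2*n + 1 - j ∉ J := by
  simp only [Rset, Finset.mem_sdiff, Finset.mem_image, Finset.mem_Icc, not_exists, not_and]
  constructor
  · rintro ⟨⟨h1, h2⟩, h3⟩
    refine ⟨⟨h1, h2⟩, fun hmem => ?_⟩
    have hb := Finset.mem_Icc.mp (hJ hmem)
    exact h3 _ hmem (by omega)
  · rintro ⟨⟨h1, h2⟩, h3⟩
    refine ⟨⟨h1, h2⟩, fun m hm heq => ?_⟩
    have hb := Finset.mem_Icc.mp (hJ hm)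
    have : m = 2*n + 1 - j := by omega
    exact h3 (this ▸ hm)

lemma card_Rset {n : ℕ} {J : Finset ℕ} (hJ : J ⊆ Finset.Icc 1 (2*n)) :
    (Rset n J).card = 2*n - J.card := by
  have hinj : Set.InjOn (fun j => 2*n + 1 - j) J := by
    intro a ha b hb hab
    have h1 := Finset.mem_Icc.mp (hJ ha)
    have h2 := Finset.mem_Icc.mp (hJ hb)
    simp only at hab
    omega
  have hsub : J.image (fun j => 2*n + 1 - j) ⊆ Finset.Icc 1 (2*n) := by
    intro x hx
    obtain ⟨m, hm, rfl⟩ := Finset.mem_image.mp hx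
    have := Finset.mem_Icc.mp (hJ hm)
    simp only [Finset.mem_Icc]
    omega
  rw [Rset, Finset.card_sdiff_of_subset hsub, Finset.card_image_of_injOn hinj,
    Nat.card_Icc]
  omega

lemma Rset_subset {n : ℕ} {J : Finset ℕ} : Rset n J ⊆ Finset.Icc 1 (2*n) :=
  Finset.sdiff_subset

theorem stmt_6 (n : ℕ) (hn : 0 < n) (J : ZMod (2*n) → Finset ℕ)
    (hJ : IsJP n (2*n) J) :
    IsJP n (2*n) (RJP n J) ∧ RJP n (RJP n J) = J := by
  obtain ⟨hsub, hcard, hjug⟩ := hJ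
  have hRsub : ∀ i, RJP n J i ⊆ Finset.Icc 1 (2*n) := fun i => Rset_subset
  constructor
  · refine ⟨hRsub, fun i => ?_, fun i j hj hjne => ?_⟩
    · rw [RJP, card_Rset (hsub _), hcard]
      omega
    · rw [RJP, mem_Rset (hsub _)] at hj ⊢
      obtain ⟨⟨h1, h2⟩, h3⟩ := hj
      have h2' : j + 1 ≤ 2*n := by omega
      refine ⟨⟨by omega, h2'⟩, fun hmem => ?_⟩
      -- hmem : 2*n + 1 - (j+1) ∈ J (-(i+1)) = J (-i - 1)
      have hb := Finset.mem_Icc.mp (hsub _ hmem)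
      have hne : 2*n + 1 - (j + 1) ≠ 2*n := by omega
      have := hjug (-(i+1)) _ hmem hne
      have heq : -(i+1) + 1 = -i := by ring
      rw [heq] at this
      have : 2*n + 1 - (j + 1) + 1 = 2*n + 1 - j := by omega
      apply h3
      rwa [this] at ‹2*n + 1 - (j + 1) + 1 ∈ J (-i)›
  · funext i
    ext j
    have h1 : RJP n (RJP n J) i = Rset n (Rset n (J i)) := by
      simp [RJP, neg_neg]
    rw [h1, mem_Rset (Rset_subset), mem_Rset (hsub i)]
    constructor
    · rintro ⟨⟨ha, hb⟩, hc⟩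
      by_contra hj
      exact hc ⟨⟨by omega, by omega⟩, by rw [show 2*n+1-(2*n+1-j) = j by omega]; exact hj⟩
    · intro hj
      have hb := Finset.mem_Icc.mp (hsub i hj)
      refine ⟨⟨by omega, by omega⟩, fun hc => ?_⟩
      obtain ⟨_, hc2⟩ := hc
      rw [show 2*n+1-(2*n+1-j) = j by omega] at hc2
      exact hc2 hj
end

section
/- Let 𝒥 = (J_i)_{i ∈ ℤ/2n} be an (n,2n)-juggling pattern and let p_𝒥 be the corresponding tuple of coordinate subspaces, (p_𝒥)_i = span{e_j : j ∈ J_i}. If there exists g ∈ G such that τ(g·p_𝒥) = g·p_𝒥, then p_𝒥 itself satisfies τ(p_𝒥) = p_𝒥, equivalently R(𝒥) = 𝒥. -/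
open Matrix

/-- The orthogonal of a subspace `V ⊆ ℂ^m` with respect to the bilinear form
`(v, w)_Ω = vᵀ Ω w`. -/
noncomputable def perp {m : ℕ} (Ω : Matrix (Fin m) (Fin m) ℂ) (V : Submodule ℂ (Fin m → ℂ)) :
    Submodule ℂ (Fin m → ℂ) where
  carrier := {w | ∀ v ∈ V, v ⬝ᵥ Ω.mulVec w = 0}
  add_mem' := by
    intro a b ha hb v hv
    simp [Matrix.mulVec_add, dotProduct_add, ha v hv, hb v hv]
  zero_mem' := by
    intro v hv
    simp
  smul_mem' := by
    intro c a ha v hv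
    simp [Matrix.mulVec_smul, ha v hv]

/-- The Gram matrix of the standard symplectic form: in 1-indexed terms its only nonzero
entries are `Ω_{i, 2n+1-i} = (-1)^(i+1)`; here, 0-indexed, `Ω i j = (-1)^i` when
`i + j = 2n - 1` and `0` otherwise. -/
def OmegaStd (n : ℕ) : Matrix (Fin (2*n)) (Fin (2*n)) ℂ :=
  fun i j => if (i : ℕ) + (j : ℕ) = 2*n - 1 then (-1 : ℂ)^(i : ℕ) else 0

/-- The matrix of the shift `s` with `s e_j = e_(j+1)` (1-indexed, `s e_(2n) = 0`). -/
def shiftMat (n : ℕ) : Matrix (Fin (2*n)) (Fin (2*n)) ℂ :=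
  fun i j => if (i : ℕ) = (j : ℕ) + 1 then 1 else 0

/-- Membership in the group `G`: a tuple of invertible matrices intertwining the shift. -/
def isG (n : ℕ) (g : ZMod (2*n) → Matrix (Fin (2*n)) (Fin (2*n)) ℂ) : Prop :=
  (∀ i, IsUnit (g i)) ∧ ∀ i, shiftMat n * g i = g (i + 1) * shiftMat n

/-- The action of a tuple of matrices on a tuple of subspaces, `(g·V)_i = g_i (V_i)`. -/
noncomputable def actG (n : ℕ) (g : ZMod (2*n) → Matrix (Fin (2*n)) (Fin (2*n)) ℂ)
    (V : ZMod (2*n) → Submodule ℂ (Fin (2*n) → ℂ)) :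
    ZMod (2*n) → Submodule ℂ (Fin (2*n) → ℂ) :=
  fun i => Submodule.map (g i).mulVecLin (V i)

/-- A tuple of subspaces is fixed by `τ` if `(V_(-i))^⊥ = V_i` for all `i`. -/
def tauFixed (n : ℕ) (V : ZMod (2*n) → Submodule ℂ (Fin (2*n) → ℂ)) : Prop :=
  ∀ i, perp (OmegaStd n) (V (-i)) = V i

/-- The coordinate subspace of `ℂ^(2n)` spanned by the (1-indexed) standard basis vectors
`e_j` with `j ∈ J`. -/
noncomputable def coordSub (n : ℕ) (J : Finset ℕ) : Submodule ℂ (Fin (2*n) → ℂ) :=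
  Submodule.span ℂ
    {v | ∃ j ∈ J, v = fun t : Fin (2*n) => if (t : ℕ) + 1 = j then (1 : ℂ) else 0}

/-!
Put `h i = Ω⁻¹ (g (-i))ᵀ Ω g i`. The `Ω`-adjoint of the shift `s` is `-s`, so `h` lies in `G` again,
and `τ(g·p_𝒥) = g·p_𝒥` together with `(p_K)^⊥ = p_{R(K)}` says that `h i` maps `p_{J_i}` onto
`p_{R(𝒥)_i}`.
Every element of `G` preserves the flag of kernels `ker sᵏ`, and `ker sᵏ` is spanned by the last `k`
basis vectors. For a coordinate subspace `p_K`, `m ∈ K` exactly when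
`p_K ⊓ ker s^(2n-m+1) ⊄ ker s^(2n-m)`, a property that an injective map preserving the flag cannot
change. Hence `R(𝒥) = 𝒥`, and then `τ(p_𝒥) = p_{R(𝒥)} = p_𝒥`.
-/

lemma mem_coordSub {n : ℕ} {K : Finset ℕ} {w : Fin (2*n) → ℂ} :
    w ∈ coordSub n K ↔ ∀ t : Fin (2*n), (t : ℕ) + 1 ∉ K → w t = 0 := by
  constructor
  · intro hw
    induction hw using Submodule.span_induction with
    | mem v hv =>
      obtain ⟨j, hj, rfl⟩ := hv
      intro t ht
      exact if_neg fun htj : (t : ℕ) + 1 = j => ht (htj ▸ hj)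
    | zero => simp
    | add u v _ _ hu hv => intro t ht; simp [hu t ht, hv t ht]
    | smul c v _ hv => intro t ht; simp [hv t ht]
  · intro hw
    rw [← Finset.univ_sum_single w]
    refine Submodule.sum_mem _ fun t _ => ?_
    by_cases ht : (t : ℕ) + 1 ∈ K
    · have hsingle : Pi.single t (w t) = w t • fun s : Fin (2*n) =>
          if (s : ℕ) + 1 = (t : ℕ) + 1 then (1 : ℂ) else 0 := by
        ext s
        simp [Pi.single_apply, Fin.val_inj]
      rw [hsingle]
      exact Submodule.smul_mem _ _ (Submodule.subset_span ⟨_, ht, rfl⟩)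
    · simp [hw t ht]

lemma mem_perp_span {m : ℕ} {Ω : Matrix (Fin m) (Fin m) ℂ} {S : Set (Fin m → ℂ)}
    {w : Fin m → ℂ} : w ∈ perp Ω (Submodule.span ℂ S) ↔ ∀ v ∈ S, v ⬝ᵥ Ω *ᵥ w = 0 := by
  refine ⟨fun h v hv => h v (Submodule.subset_span hv), fun h v hv => ?_⟩
  induction hv using Submodule.span_induction with
  | mem x hx => exact h x hx
  | zero => simp
  | add x y _ _ hx hy => rw [add_dotProduct, hx, hy, add_zero]
  | smul c x _ hx => rw [smul_dotProduct, hx, smul_zero]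

lemma mem_perp_coordSub {n : ℕ} {Ω : Matrix (Fin (2*n)) (Fin (2*n)) ℂ} {K : Finset ℕ}
    {w : Fin (2*n) → ℂ} :
    w ∈ perp Ω (coordSub n K) ↔ ∀ t : Fin (2*n), (t : ℕ) + 1 ∈ K → (Ω *ᵥ w) t = 0 := by
  rw [coordSub, mem_perp_span]
  constructor
  · intro h t ht
    simpa [dotProduct, Fin.val_inj] using h _ ⟨_, ht, rfl⟩
  · rintro h v ⟨j, hj, rfl⟩
    refine Finset.sum_eq_zero fun t _ => ?_
    by_cases htj : (t : ℕ) + 1 = j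
    · rw [h t (htj ▸ hj), mul_zero]
    · simp [htj]

section formAdjoint

variable {m : ℕ}

noncomputable def formAdjoint (Ω A : Matrix (Fin m) (Fin m) ℂ) : Matrix (Fin m) (Fin m) ℂ :=
  Ω⁻¹ * Aᵀ * Ω

variable {Ω : Matrix (Fin m) (Fin m) ℂ}

lemma dotProduct_mulVec_formAdjoint (hΩ : IsUnit Ω.det) (A : Matrix (Fin m) (Fin m) ℂ)
    (v w : Fin m → ℂ) : v ⬝ᵥ Ω *ᵥ (formAdjoint Ω A *ᵥ w) = (A *ᵥ v) ⬝ᵥ Ω *ᵥ w := by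
  rw [formAdjoint, mulVec_mulVec, Matrix.mul_assoc, mul_nonsing_inv_cancel_left Ω _ hΩ,
    ← mulVec_mulVec, dotProduct_mulVec, vecMul_transpose]

lemma perp_map (hΩ : IsUnit Ω.det) (A : Matrix (Fin m) (Fin m) ℂ)
    (V : Submodule ℂ (Fin m → ℂ)) :
    perp Ω (Submodule.map A.mulVecLin V) =
      Submodule.comap (formAdjoint Ω A).mulVecLin (perp Ω V) := by
  ext w
  change (∀ u ∈ Submodule.map A.mulVecLin V, u ⬝ᵥ Ω *ᵥ w = 0) ↔
    ∀ v ∈ V, v ⬝ᵥ Ω *ᵥ (formAdjoint Ω A *ᵥ w) = 0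
  simp only [dotProduct_mulVec_formAdjoint hΩ, Submodule.mem_map, mulVecLin_apply,
    forall_exists_index, and_imp, forall_apply_eq_imp_iff₂]

lemma formAdjoint_mul (hΩ : IsUnit Ω.det) (A B : Matrix (Fin m) (Fin m) ℂ) :
    formAdjoint Ω (A * B) = formAdjoint Ω B * formAdjoint Ω A := by
  simp only [formAdjoint, transpose_mul, Matrix.mul_assoc, mul_nonsing_inv_cancel_left Ω _ hΩ]

lemma isUnit_formAdjoint (hΩ : IsUnit Ω.det) {A : Matrix (Fin m) (Fin m) ℂ} (hA : IsUnit A) :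
    IsUnit (formAdjoint Ω A) :=
  ((isUnit_nonsing_inv_iff.2 ((isUnit_iff_isUnit_det Ω).2 hΩ)).mul ((isUnit_transpose A).2 hA)).mul
    ((isUnit_iff_isUnit_det Ω).2 hΩ)

end formAdjoint

lemma OmegaStd_mulVec_apply {n : ℕ} (w : Fin (2*n) → ℂ) (t : Fin (2*n)) :
    (OmegaStd n *ᵥ w) t = (-1) ^ (t : ℕ) * w t.rev := by
  rw [mulVec, dotProduct, Finset.sum_eq_single t.rev]
  · rw [OmegaStd, if_pos (by simp [Fin.val_rev]; omega)]
  · intro b _ hb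
    rw [OmegaStd, if_neg, zero_mul]
    intro h
    exact hb (Fin.ext (by simp [Fin.val_rev]; omega))
  · simp

lemma succ_mem_Rset_iff {n : ℕ} {K : Finset ℕ} (t : Fin (2*n)) :
    (t : ℕ) + 1 ∈ Rset n K ↔ (t.rev : ℕ) + 1 ∉ K := by
  have := t.isLt
  simp only [Rset, Finset.mem_sdiff, Finset.mem_Icc, Finset.mem_image, Fin.val_rev, not_exists,
    not_and]
  constructor
  · rintro ⟨-, h⟩ hK
    exact h _ hK (by omega)
  · intro h
    refine ⟨by omega, fun j hj hjt => h ?_⟩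
    rwa [show 2 * n - (t + 1) + 1 = j by omega]

lemma perp_coordSub {n : ℕ} (K : Finset ℕ) :
    perp (OmegaStd n) (coordSub n K) = coordSub n (Rset n K) := by
  ext w
  rw [mem_perp_coordSub, mem_coordSub]
  simp only [OmegaStd_mulVec_apply, mul_eq_zero, pow_eq_zero_iff', neg_eq_zero, one_ne_zero,
    false_and, false_or, succ_mem_Rset_iff, not_not]
  exact ⟨fun h t ht => by simpa using h t.rev ht, fun h t ht => h t.rev (by simpa using ht)⟩

lemma OmegaStd_mul_self {n : ℕ} : OmegaStd n * OmegaStd n = -1 := by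
  refine mulVec_injective (funext fun w => funext fun t => ?_)
  have hodd : Odd ((t : ℕ) + (t.rev : ℕ)) := ⟨n - 1, by simp [Fin.val_rev]; omega⟩
  rw [← mulVec_mulVec, OmegaStd_mulVec_apply, OmegaStd_mulVec_apply, Fin.rev_rev, ← mul_assoc,
    ← pow_add, hodd.neg_one_pow, neg_mulVec, one_mulVec, Pi.neg_apply, neg_one_mul]

lemma isUnit_det_OmegaStd (n : ℕ) : IsUnit (OmegaStd n).det :=
  isUnit_det_of_left_inverse (B := -OmegaStd n)
    (by rw [Matrix.neg_mul, OmegaStd_mul_self, neg_neg])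

lemma transpose_shiftMat_mul_OmegaStd {n : ℕ} :
    (shiftMat n)ᵀ * OmegaStd n = -(OmegaStd n * shiftMat n) := by
  ext a c
  have ha := a.isLt
  have hc := c.isLt
  simp only [Matrix.mul_apply, transpose_apply, OmegaStd, shiftMat, Matrix.neg_apply, mul_ite,
    ite_mul, mul_one, one_mul, mul_zero, zero_mul]
  by_cases h : (a : ℕ) + c + 2 = 2 * n
  · rw [Finset.sum_eq_single ⟨a + 1, by omega⟩, Finset.sum_eq_single ⟨c + 1, by omega⟩]
    · simp [show (a : ℕ) + 1 + c = 2 * n - 1 by omega, show (a : ℕ) + (c + 1) = 2 * n - 1 by omega,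
        pow_succ]
    all_goals simp +contextual [Fin.ext_iff]
  · refine (Finset.sum_eq_zero fun j _ => ?_).trans
      (neg_eq_zero.2 (Finset.sum_eq_zero fun j _ => ?_)).symm <;>
    split_ifs <;> first | rfl | omega

lemma formAdjoint_OmegaStd_shiftMat {n : ℕ} :
    formAdjoint (OmegaStd n) (shiftMat n) = -shiftMat n := by
  rw [formAdjoint, Matrix.mul_assoc, transpose_shiftMat_mul_OmegaStd, Matrix.mul_neg,
    nonsing_inv_mul_cancel_left _ _ (isUnit_det_OmegaStd n)]

lemma shiftMat_mulVec_apply {n : ℕ} (w : Fin (2*n) → ℂ) (a : Fin (2*n)) :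
    (shiftMat n *ᵥ w) a = if h : 1 ≤ (a : ℕ) then w ⟨a - 1, by omega⟩ else 0 := by
  rw [mulVec, dotProduct]
  split_ifs with ha
  · rw [Finset.sum_eq_single ⟨a - 1, by omega⟩]
    · simp [shiftMat, ha]
    · intro b _ hb
      rw [shiftMat, if_neg fun h => hb (Fin.ext (by simp; omega)), zero_mul]
    · simp
  · refine Finset.sum_eq_zero fun b _ => ?_
    rw [shiftMat, if_neg (by omega), zero_mul]

lemma shiftMat_pow_mulVec_apply {n : ℕ} (k : ℕ) (w : Fin (2*n) → ℂ) (a : Fin (2*n)) :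
    (shiftMat n ^ k *ᵥ w) a = if h : k ≤ (a : ℕ) then w ⟨a - k, by omega⟩ else 0 := by
  induction k generalizing w with
  | zero => simp
  | succ k ih =>
    rw [pow_succ, ← mulVec_mulVec, ih]
    split_ifs with h h' h'
    · rw [shiftMat_mulVec_apply, dif_pos (by simp; omega)]
      simp [Nat.sub_add_eq]
    · rw [shiftMat_mulVec_apply, dif_neg (by simp; omega)]
    · omega
    · rfl

lemma mem_ker_shiftMat_pow {n k : ℕ} {w : Fin (2*n) → ℂ} :
    w ∈ LinearMap.ker (shiftMat n ^ k).mulVecLin ↔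
      ∀ t : Fin (2*n), (t : ℕ) + k < 2*n → w t = 0 := by
  rw [LinearMap.mem_ker, mulVecLin_apply]
  constructor
  · intro h t ht
    simpa [shiftMat_pow_mulVec_apply] using congrFun h ⟨t + k, ht⟩
  · intro h
    ext a
    rw [shiftMat_pow_mulVec_apply]
    split_ifs
    · exact h _ (by simp; omega)
    · rfl

lemma mem_iff_not_inf_ker_shiftMat_pow_le {n m : ℕ} {K : Finset ℕ} (hm1 : 1 ≤ m)
    (hm2 : m ≤ 2*n) :
    m ∈ K ↔ ¬ coordSub n K ⊓ LinearMap.ker (shiftMat n ^ (2*n - m + 1)).mulVecLin ≤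
      LinearMap.ker (shiftMat n ^ (2*n - m)).mulVecLin := by
  constructor
  · intro hmK hle
    set t : Fin (2*n) := ⟨m - 1, by omega⟩
    have hsingle : Pi.single t (1 : ℂ) ∈ coordSub n K ⊓
        LinearMap.ker (shiftMat n ^ (2*n - m + 1)).mulVecLin := by
      refine ⟨mem_coordSub.2 fun s hs => Pi.single_eq_of_ne ?_ _,
        mem_ker_shiftMat_pow.2 fun s hs => Pi.single_eq_of_ne ?_ _⟩
      · rintro rfl
        exact hs (by simp [t]; rwa [Nat.sub_add_cancel hm1])
      · rintro rfl
        simp [t] at hs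
        omega
    have := mem_ker_shiftMat_pow.1 (hle hsingle) t (by simp [t]; omega)
    simp at this
  · rw [not_imp_comm]
    intro hmK
    refine fun w ⟨hwK, hwker⟩ => mem_ker_shiftMat_pow.2 fun t ht => ?_
    by_cases htm : (t : ℕ) + 1 = m
    · exact mem_coordSub.1 hwK t (htm ▸ hmK)
    · exact mem_ker_shiftMat_pow.1 hwker t (by omega)

section isG

variable {n : ℕ} {g : ZMod (2*n) → Matrix (Fin (2*n)) (Fin (2*n)) ℂ}

theorem isG.shiftMat_pow_mul (hg : isG n g) (i : ZMod (2*n)) (k : ℕ) :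
    shiftMat n ^ k * g i = g (i + k) * shiftMat n ^ k := by
  induction k generalizing i with
  | zero => simp
  | succ k ih =>
    calc shiftMat n ^ (k + 1) * g i = shiftMat n ^ k * (shiftMat n * g i) := by
          rw [pow_succ, Matrix.mul_assoc]
      _ = g (i + 1 + k) * (shiftMat n ^ k * shiftMat n) := by
          rw [hg.2, ← Matrix.mul_assoc, ih, Matrix.mul_assoc]
      _ = g (i + (k + 1 : ℕ)) * shiftMat n ^ (k + 1) := by
          rw [← pow_succ]; push_cast; ring_nf

theorem isG.map_ker_shiftMat_pow (hg : isG n g) (i : ZMod (2*n)) (k : ℕ) :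
    Submodule.map (g i).mulVecLin (LinearMap.ker (shiftMat n ^ k).mulVecLin) =
      LinearMap.ker (shiftMat n ^ k).mulVecLin := by
  have hcomap : Submodule.comap (g i).mulVecLin (LinearMap.ker (shiftMat n ^ k).mulVecLin) =
      LinearMap.ker (shiftMat n ^ k).mulVecLin := by
    rw [← LinearMap.ker_comp, ← mulVecLin_mul, hg.shiftMat_pow_mul, mulVecLin_mul,
      LinearMap.ker_comp_of_ker_eq_bot _
        (LinearMap.ker_eq_bot.2 (mulVec_injective_iff_isUnit.2 (hg.1 _)))]
  conv_lhs => rw [← hcomap]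
  exact Submodule.map_comap_eq_of_surjective (mulVec_surjective_iff_isUnit.2 (hg.1 i)) _

theorem isG.eq_of_map_coordSub_eq (hg : isG n g) {i : ZMod (2*n)} {K L : Finset ℕ}
    (hK : K ⊆ Finset.Icc 1 (2*n)) (hL : L ⊆ Finset.Icc 1 (2*n))
    (hKL : Submodule.map (g i).mulVecLin (coordSub n K) = coordSub n L) : K = L := by
  have hinj : Function.Injective (g i).mulVecLin := mulVec_injective_iff_isUnit.2 (hg.1 i)
  have hker : ∀ k, Submodule.map (g i).mulVecLin
      (coordSub n K ⊓ LinearMap.ker (shiftMat n ^ k).mulVecLin) =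
        coordSub n L ⊓ LinearMap.ker (shiftMat n ^ k).mulVecLin := fun k => by
    rw [Submodule.map_inf _ hinj, hKL, hg.map_ker_shiftMat_pow]
  ext m
  by_cases hm : m ∈ Finset.Icc 1 (2*n)
  · rw [Finset.mem_Icc] at hm
    have hle := Submodule.map_le_map_iff_of_injective hinj
      (coordSub n K ⊓ LinearMap.ker (shiftMat n ^ (2*n - m + 1)).mulVecLin)
      (LinearMap.ker (shiftMat n ^ (2*n - m)).mulVecLin)
    rw [hker, hg.map_ker_shiftMat_pow] at hle
    rw [mem_iff_not_inf_ker_shiftMat_pow_le hm.1 hm.2,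
      mem_iff_not_inf_ker_shiftMat_pow_le hm.1 hm.2, hle]
  · exact iff_of_false (fun h => hm (hK h)) (fun h => hm (hL h))

theorem isG.formAdjoint_neg_mul (hg : isG n g) :
    isG n fun i => formAdjoint (OmegaStd n) (g (-i)) * g i := by
  have hΩ := isUnit_det_OmegaStd n
  refine ⟨fun i => (isUnit_formAdjoint hΩ (hg.1 _)).mul (hg.1 i), fun i => ?_⟩
  have hcomm : g (-i) * shiftMat n = shiftMat n * g (-(i + 1)) := by
    simpa using (hg.2 (-(i + 1))).symm
  have hadj : shiftMat n * formAdjoint (OmegaStd n) (g (-i)) =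
      formAdjoint (OmegaStd n) (g (-(i + 1))) * shiftMat n := by
    calc shiftMat n * formAdjoint (OmegaStd n) (g (-i))
        = -formAdjoint (OmegaStd n) (g (-i) * shiftMat n) := by
          rw [formAdjoint_mul hΩ, formAdjoint_OmegaStd_shiftMat, Matrix.neg_mul, neg_neg]
      _ = formAdjoint (OmegaStd n) (g (-(i + 1))) * shiftMat n := by
          rw [hcomm, formAdjoint_mul hΩ, formAdjoint_OmegaStd_shiftMat, Matrix.mul_neg,
            neg_neg]
  simp only [← Matrix.mul_assoc, hadj]
  rw [Matrix.mul_assoc, hg.2, ← Matrix.mul_assoc]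

lemma map_coordSub_eq_coordSub_RJP (hg : isG n g) {J : ZMod (2*n) → Finset ℕ}
    (hfix : tauFixed n (actG n g fun i => coordSub n (J i))) (i : ZMod (2*n)) :
    Submodule.map (formAdjoint (OmegaStd n) (g (-i)) * g i).mulVecLin (coordSub n (J i)) =
      coordSub n (RJP n J i) := by
  have hΩ := isUnit_det_OmegaStd n
  have h : perp (OmegaStd n) (Submodule.map (g (-i)).mulVecLin (coordSub n (J (-i)))) =
      Submodule.map (g i).mulVecLin (coordSub n (J i)) := hfix i
  rw [perp_map hΩ, perp_coordSub] at h
  rw [mulVecLin_mul, Submodule.map_comp, ← h, Submodule.map_comap_eq_of_surjective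
    (mulVec_surjective_iff_isUnit.2 (isUnit_formAdjoint hΩ (hg.1 _)))]
  rfl

end isG

theorem stmt_9_general (n : ℕ) (J : ZMod (2*n) → Finset ℕ)
    (hJ : IsJP n (2*n) J)
    (hex : ∃ g, isG n g ∧ tauFixed n (actG n g (fun i => coordSub n (J i)))) :
    tauFixed n (fun i => coordSub n (J i)) ∧ RJP n J = J := by
  obtain ⟨g, hg, hfix⟩ := hex
  have hRJ : RJP n J = J := funext fun i =>
    ((hg.formAdjoint_neg_mul).eq_of_map_coordSub_eq (hJ.1 i) Finset.sdiff_subset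
      (map_coordSub_eq_coordSub_RJP hg hfix i)).symm
  refine ⟨fun i => ?_, hRJ⟩
  change perp _ (coordSub n (J (-i))) = coordSub n (J i)
  rw [perp_coordSub, ← congrFun hRJ i]
  rfl

theorem stmt_9 (n : ℕ) (hn : 0 < n) (J : ZMod (2*n) → Finset ℕ)
    (hJ : IsJP n (2*n) J)
    (hex : ∃ g, isG n g ∧ tauFixed n (actG n g (fun i => coordSub n (J i)))) :
    tauFixed n (fun i => coordSub n (J i)) ∧ RJP n J = J :=
  stmt_9_general n J hJ hex
end

section
/- Let f be a bounded (k,N)-affine permutation, let i < j be integers with j − i not divisible by N, and let t : ℤ → ℤ be the affine reflection that exchanges i+mN and j+mN for every m ∈ ℤ and fixes all integers not congruent to i or j modulo N. If f∘t is also bounded, then j − i < N. -/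
/-- A `(k,N)`-affine permutation: a bijection `f : ℤ → ℤ` with `f(i+N) = f(i)+N` and
`∑_{i=1}^{N} (f(i)-i) = kN`. -/
def IsAffinePerm (k N : ℕ) (f : ℤ → ℤ) : Prop :=
  Function.Bijective f ∧ (∀ i : ℤ, f (i + N) = f i + N) ∧
    (∑ i ∈ Finset.Icc (1 : ℤ) (N : ℤ), (f i - i)) = k * N

/-- Boundedness: `i ≤ f(i) ≤ i + N` for all `i`. -/
def IsBoundedAP (N : ℕ) (f : ℤ → ℤ) : Prop :=
  ∀ i : ℤ, i ≤ f i ∧ f i ≤ i + N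

theorem stmt_11 (k N : ℕ) (hN : 0 < N) (f t : ℤ → ℤ)
    (hf : IsAffinePerm k N f) (hfb : IsBoundedAP N f)
    (i j : ℤ) (hij : i < j) (hnd : ¬ ((N : ℤ) ∣ (j - i)))
    (ht1 : ∀ m : ℤ, t (i + m * N) = j + m * N)
    (ht2 : ∀ m : ℤ, t (j + m * N) = i + m * N)
    (ht3 : ∀ x : ℤ, (∀ m : ℤ, x ≠ i + m * N) → (∀ m : ℤ, x ≠ j + m * N) → t x = x)
    (hb : IsBoundedAP N (f ∘ t)) :
    j - i < N := by
  have hti : t i = j := by have := ht1 0; simpa using this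
  have h1 : f j ≤ i + N := by
    have := (hb i).2
    simpa [Function.comp, hti] using this
  have h2 : j ≤ f j := (hfb j).1
  have hle : j - i ≤ N := by omega
  rcases lt_or_eq_of_le hle with h | h
  · exact h
  · exact absurd ⟨1, by omega⟩ hnd
end

section
/- Let f be a bounded (n,2n)-affine permutation. Then Φ maps L(f) into L(Rf), Φ∘Φ is the identity on L(f), hence Φ is a bijection from L(f) onto L(Rf); in particular ℓ(f) = ℓ(Rf). -/
/-- The map `R`, `(Rf)(i) = 2n - f(-i-1) - 1`. -/
def Rperm (n : ℕ) (f : ℤ → ℤ) : ℤ → ℤ := fun i => 2*n - f (-i - 1) - 1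

/-- The inversion set `L(f) = {(x,y) ∈ {0,…,2n-1} × ℤ : x < y ∧ f(x) > f(y)}`. -/
def Lset (n : ℕ) (f : ℤ → ℤ) : Set (ℤ × ℤ) :=
  {p | 0 ≤ p.1 ∧ p.1 ≤ 2*n - 1 ∧ p.1 < p.2 ∧ f p.2 < f p.1}

/-- The map `Φ`, sending `(x,y)` (with `0 ≤ x ≤ 2n-1`, `x < y`) to the unique pair
`(x', y') = (2n-y-1+2nm, 2n-x-1+2nm)` with `m ∈ ℤ` and `x' ∈ {0,…,2n-1}`. -/
def PhiMap (n : ℕ) (p : ℤ × ℤ) : ℤ × ℤ :=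
  ((2*n - p.2 - 1) % (2*n),
    2*n - p.1 - 1 + ((2*n - p.2 - 1) % (2*n) - (2*n - p.2 - 1)))

/-!
`Rf` is `f` conjugated by the reflection `i ↦ -i-1` (up to a shift by `2n`), and `Φ` is that
reflection on pairs, `(x, y) ↦ (2n-1-y, 2n-1-x)`, followed by the translation by a multiple of
`2n` that brings the first coordinate into `{0,…,2n-1}`. Since `f(i+2n) = f(i)+2n`, such
translations preserve inversions, so `Φ` sends inversions of `f` to inversions of `Rf`; and `Φ`
is an involution because its second application only has to undo the translation.
-/

lemma map_add_int_mul_of_map_add {N : ℤ} {f : ℤ → ℤ} (h : ∀ i, f (i + N) = f i + N)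
    (k i : ℤ) : f (i + k * N) = f i + k * N := by
  have hper : Function.Periodic (fun i => f i - i) N := fun i => by
    simp only [h]; ring
  have := hper.int_mul k i
  rw [Int.cast_id] at this
  linarith

section

variable {n : ℕ} {f : ℤ → ℤ}

lemma Rperm_Rperm : Rperm n (Rperm n f) = f := by
  funext i
  simp only [Rperm, neg_sub, sub_neg_eq_add]
  ring_nf

lemma Rperm_add (hf : ∀ i, f (i + 2*n) = f i + 2*n) (i : ℤ) :
    Rperm n f (i + 2*n) = Rperm n f i + 2*n := by
  have := map_add_int_mul_of_map_add hf (-1) (-i - 1)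
  simp only [Rperm]
  rw [show -(i + 2*n) - 1 = -i - 1 + -1 * (2*n : ℤ) by ring, this]
  ring

lemma Rperm_apply_reflect (hf : ∀ i, f (i + 2*n) = f i + 2*n) (y k : ℤ) :
    Rperm n f (2*n - y - 1 - 2*n*k) = 2*n*(2 - k) - 1 - f y := by
  have := map_add_int_mul_of_map_add hf (k - 1) y
  simp only [Rperm]
  rw [show -(2*n - y - 1 - 2*n*k) - 1 = y + (k - 1) * (2*n : ℤ) by ring, this]
  ring

lemma PhiMap_eq (p : ℤ × ℤ) :
    PhiMap n p = (2*n - p.2 - 1 - 2*n*((2*n - p.2 - 1) / (2*n)),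
      2*n - p.1 - 1 - 2*n*((2*n - p.2 - 1) / (2*n))) := by
  simp only [PhiMap, Int.emod_def]
  ring_nf

lemma PhiMap_PhiMap {p : ℤ × ℤ} (h₀ : 0 ≤ p.1) (h₁ : p.1 ≤ 2*n - 1) :
    PhiMap n (PhiMap n p) = p := by
  have hquot : (p.1 + 2*n*((2*n - p.2 - 1) / (2*n))) / (2*n) = (2*n - p.2 - 1) / (2*n) := by
    rw [Int.add_mul_ediv_left _ _ (by omega), Int.ediv_eq_zero_of_lt h₀ (by omega), zero_add]
  rw [PhiMap_eq p, PhiMap_eq]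
  simp only
  rw [show 2*(n:ℤ) - (2*n - p.1 - 1 - 2*n*((2*n - p.2 - 1) / (2*n))) - 1
      = p.1 + 2*n*((2*n - p.2 - 1) / (2*n)) by ring, hquot]
  ext <;> simp only <;> ring

lemma mapsTo_PhiMap_Lset (hf : ∀ i, f (i + 2*n) = f i + 2*n) :
    Set.MapsTo (PhiMap n) (Lset n f) (Lset n (Rperm n f)) := by
  rintro ⟨x, y⟩ ⟨hx₀, hx₁, hxy, hinv⟩
  simp only at hx₀ hx₁ hxy hinv
  have hpos : (0 : ℤ) < 2*n := by omega
  have hmod₀ := Int.emod_nonneg (2*n - y - 1) hpos.ne'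
  have hmod₁ := Int.emod_lt_of_pos (2*n - y - 1) hpos
  refine ⟨hmod₀, by simp only [PhiMap]; omega, by simp only [PhiMap]; omega, ?_⟩
  rw [PhiMap_eq]
  simp only [Rperm_apply_reflect hf]
  omega

end

theorem stmt_12_general (n : ℕ) (f : ℤ → ℤ)
    (hf : IsAffinePerm n (2*n) f) :
    Set.MapsTo (PhiMap n) (Lset n f) (Lset n (Rperm n f))
    ∧ (∀ p ∈ Lset n f, PhiMap n (PhiMap n p) = p)
    ∧ Set.BijOn (PhiMap n) (Lset n f) (Lset n (Rperm n f))
    ∧ (Lset n f).ncard = (Lset n (Rperm n f)).ncard := by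
  have hper : ∀ i : ℤ, f (i + 2*n) = f i + 2*n := by
    simpa only [Nat.cast_mul, Nat.cast_ofNat] using hf.2.1
  have hmaps := mapsTo_PhiMap_Lset hper
  have hmaps' : Set.MapsTo (PhiMap n) (Lset n (Rperm n f)) (Lset n f) := by
    simpa only [Rperm_Rperm] using mapsTo_PhiMap_Lset (Rperm_add hper)
  have hinvol : ∀ g, ∀ p ∈ Lset n g, PhiMap n (PhiMap n p) = p :=
    fun _ _ hp => PhiMap_PhiMap hp.1 hp.2.1
  have hbij : Set.BijOn (PhiMap n) (Lset n f) (Lset n (Rperm n f)) :=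
    Set.InvOn.bijOn ⟨hinvol f, hinvol (Rperm n f)⟩ hmaps hmaps'
  exact ⟨hmaps, hinvol f, hbij, hbij.ncard_eq⟩

theorem stmt_12 (n : ℕ) (hn : 0 < n) (f : ℤ → ℤ)
    (hf : IsAffinePerm n (2*n) f) (hb : IsBoundedAP (2*n) f) :
    Set.MapsTo (PhiMap n) (Lset n f) (Lset n (Rperm n f))
    ∧ (∀ p ∈ Lset n f, PhiMap n (PhiMap n p) = p)
    ∧ Set.BijOn (PhiMap n) (Lset n f) (Lset n (Rperm n f))
    ∧ (Lset n f).ncard = (Lset n (Rperm n f)).ncard :=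
  stmt_12_general n f hf
end

section
/- Let n ≥ 2 and let S_C ⊆ A^0_{2n} be the set consisting of s_{2n−1}, s_{n−1}, and the products s_i·s_{2n−i−2} for 0 ≤ i ≤ n−2. Then every element of S_C is fixed by R^0, and the fixed-point subgroup {g ∈ A^0_{2n} : R^0(g) = g} is exactly the subgroup of A^0_{2n} generated by S_C. -/
/-- The underlying function of the affine simple reflection `s_i`, exchanging
`i + 2nt` and `i + 1 + 2nt` for all `t ∈ ℤ` and fixing all other integers. -/
def sFun (n : ℕ) (i : ℤ) : ℤ → ℤ := fun x =>
  if (2*(n:ℤ)) ∣ (x - i) then x + 1 else if (2*(n:ℤ)) ∣ (x - i - 1) then x - 1 else x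

theorem two_n_not_dvd_one (n : ℕ) : ¬ ((2*(n:ℤ)) ∣ 1) := by
  intro h
  have h' := Int.isUnit_iff.mp (isUnit_of_dvd_one h)
  omega

theorem sFun_invol (n : ℕ) (i : ℤ) (x : ℤ) : sFun n i (sFun n i x) = x := by
  unfold sFun
  by_cases h1 : (2*(n:ℤ)) ∣ (x - i)
  · have h2 : ¬ (2*(n:ℤ)) ∣ (x + 1 - i) := by
      intro hc
      apply two_n_not_dvd_one n
      have hd := dvd_sub hc h1
      have he : (x + 1 - i) - (x - i) = 1 := by ring
      rwa [he] at hd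
    have h3 : (2*(n:ℤ)) ∣ (x + 1 - i - 1) := by
      have he : x + 1 - i - 1 = x - i := by ring
      rwa [he]
    simp [h1, h2, h3]
  · by_cases h2 : (2*(n:ℤ)) ∣ (x - i - 1)
    · have h3 : (2*(n:ℤ)) ∣ (x - 1 - i) := by
        have he : x - 1 - i = x - i - 1 := by ring
        rwa [he]
      simp [h1, h2, h3]
    · simp [h1, h2]

/-- The affine simple reflection `s_i ∈ A⁰_(2n)`. -/
def sPerm (n : ℕ) (i : ℤ) : Equiv.Perm ℤ :=
  ⟨sFun n i, sFun n i, sFun_invol n i, sFun_invol n i⟩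

/-- Membership in `A⁰_(2n)`: a bijection of `ℤ` with `g(i+2n) = g(i)+2n` and
`∑_{i=1}^{2n} (g(i)-i) = 0`. -/
def IsA0 (n : ℕ) (g : Equiv.Perm ℤ) : Prop :=
  (∀ i : ℤ, g (i + 2*n) = g i + 2*n) ∧
    (∑ i ∈ Finset.Icc (1 : ℤ) (2*(n:ℤ)), (g i - i)) = 0

/-- The automorphism `R⁰`, `(R⁰g)(a) = -g(-a-1) - 1`. -/
def R0 (g : Equiv.Perm ℤ) : Equiv.Perm ℤ where
  toFun a := -(g (-a - 1)) - 1
  invFun a := -(g.symm (-a - 1)) - 1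
  left_inv := by
    intro a
    show -(g.symm (-(-(g (-a - 1)) - 1) - 1)) - 1 = a
    have h : -(-(g (-a - 1)) - 1) - 1 = g (-a - 1) := by ring
    rw [h, Equiv.symm_apply_apply]
    ring
  right_inv := by
    intro a
    show -(g (-(-(g.symm (-a - 1)) - 1) - 1)) - 1 = a
    have h : -(-(g.symm (-a - 1)) - 1) - 1 = g.symm (-a - 1) := by ring
    rw [h, Equiv.apply_symm_apply]
    ring

/-- The generating set `S_C`: the reflections `s_(2n-1)`, `s_(n-1)` and the products
`s_i · s_(2n-i-2)` for `0 ≤ i ≤ n-2`. -/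
def SC (n : ℕ) : Set (Equiv.Perm ℤ) :=
  {sPerm n (2*(n:ℤ) - 1), sPerm n ((n:ℤ) - 1)} ∪
    {x | ∃ i : ℤ, 0 ≤ i ∧ i ≤ (n:ℤ) - 2 ∧ x = sPerm n i * sPerm n (2*(n:ℤ) - i - 2)}

/-! The `R⁰`-fixed points form a subgroup of `A⁰_{2n}` containing `S_C`: `R⁰ s_j = s_{2n-j-2}`,
and for `0 ≤ i ≤ n-2` the reflections `s_i` and `s_{2n-i-2}` move disjoint residue classes, so
they commute. Conversely, induct on `φ g = ∑_{x=1}^{2n} (g x - x)²`, which changes by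
`2 (g (j+1) - g j)` under `g ↦ g s_j`. A strictly increasing element of `A⁰_{2n}` is the identity,
so a fixed `g ≠ 1` has a descent `g (a+1) < g a` with `0 ≤ a < 2n`, and the symmetry
`g (-x-1) = -g x - 1` mirrors it to a descent at `2n - a - 2`. Right multiplication by `s_a` (if
`a ≡ 2n - a - 2`, i.e. `a ∈ {n-1, 2n-1}`) or by `s_i s_{2n-i-2}` with `i = min a (2n-a-2)` is then
an element of `S_C` that lowers `φ`. -/

open Equiv Finset

def periodicPerm (m : ℤ) : Subgroup (Perm ℤ) := Subgroup.centralizer {Equiv.addRight m}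

section periodicPerm

variable {m : ℤ} {g : Perm ℤ}

theorem mem_periodicPerm : g ∈ periodicPerm m ↔ ∀ x, g (x + m) = g x + m := by
  simp [periodicPerm, Subgroup.mem_centralizer_singleton_iff, Equiv.ext_iff]

theorem periodic_apply_sub_self (hg : g ∈ periodicPerm m) :
    Function.Periodic (fun x => g x - x) m :=
  fun x => by simp only [mem_periodicPerm.1 hg x]; ring

theorem apply_add_zsmul (hg : g ∈ periodicPerm m) (x k : ℤ) : g (x + k • m) = g x + k • m := by
  have := (periodic_apply_sub_self hg).zsmul k x
  linarith

theorem sum_Ioc_comp_eq (hm : 0 ≤ m) {F : ℤ → ℤ} (hF : F.Periodic m) (hg : g ∈ periodicPerm m)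
    (a b : ℤ) : ∑ x ∈ Ioc a (a + m), F (g x) = ∑ x ∈ Ioc b (b + m), F x := by
  obtain rfl | hm := hm.eq_or_lt
  · simp
  have reduce (c y : ℤ) : toIocMod hm c y = y + (-toIocDiv hm c y) • m := by
    rw [neg_smul, ← sub_eq_add_neg, ← self_sub_toIocMod, sub_sub_cancel]
  have back {h : Perm ℤ} (hh : h ∈ periodicPerm m) (c : ℤ) {x : ℤ} (hx : x ∈ Ioc c (c + m))
      (d : ℤ) : toIocMod hm c (h⁻¹ (toIocMod hm d (h x))) = x := by
    rw [reduce d, apply_add_zsmul (inv_mem hh), Perm.inv_def, Equiv.symm_apply_apply,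
      toIocMod_add_zsmul, toIocMod_eq_self, ← Finset.coe_Ioc]
    exact hx
  refine sum_nbij' (fun x => toIocMod hm b (g x)) (fun y => toIocMod hm a (g⁻¹ y))
    (fun _ _ => by simpa using toIocMod_mem_Ioc hm b _)
    (fun _ _ => by simpa using toIocMod_mem_Ioc hm a _)
    (fun x hx => back hg a hx b) (fun y hy => ?_) (fun x _ => ?_)
  · simpa using back (inv_mem hg) b hy a
  · rw [reduce, hF.zsmul]

end periodicPerm

theorem R0_mul (g h : Perm ℤ) : R0 (g * h) = R0 g * R0 h := by
  ext a
  simp [R0]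

def R0Hom : Perm ℤ →* Perm ℤ where
  toFun := R0
  map_one' := by ext a; simp [R0]
  map_mul' := R0_mul

theorem R0_eq_self_iff {g : Perm ℤ} : R0 g = g ↔ ∀ a, g (-a - 1) = -g a - 1 := by
  refine Equiv.ext_iff.trans (forall_congr' fun a => ?_)
  change -g (-a - 1) - 1 = g a ↔ _
  omega

theorem isA0_iff {n : ℕ} {g : Perm ℤ} :
    IsA0 n g ↔ g ∈ periodicPerm (2 * n) ∧ ∑ x ∈ Ioc 0 (2 * (n : ℤ)), (g x - x) = 0 := by
  rw [IsA0, mem_periodicPerm, ← Icc_add_one_left_eq_Ioc, zero_add]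

def A0 (n : ℕ) : Subgroup (Perm ℤ) where
  carrier := {g | IsA0 n g}
  one_mem' := isA0_iff.2 ⟨one_mem _, by simp⟩
  mul_mem' {g h} hg hh := by
    obtain ⟨hg, hg'⟩ := isA0_iff.1 hg
    obtain ⟨hh, hh'⟩ := isA0_iff.1 hh
    refine isA0_iff.2 ⟨mul_mem hg hh, ?_⟩
    have := sum_Ioc_comp_eq (by positivity) (periodic_apply_sub_self hg) hh 0 0
    simp only [zero_add] at this
    calc ∑ x ∈ Ioc 0 (2 * (n : ℤ)), ((g * h) x - x)
        = ∑ x ∈ Ioc 0 (2 * (n : ℤ)), ((g (h x) - h x) + (h x - x)) := by simp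
      _ = 0 := by rw [sum_add_distrib, this, hg', hh', add_zero]
  inv_mem' {g} hg := by
    obtain ⟨hg, hg'⟩ := isA0_iff.1 hg
    refine isA0_iff.2 ⟨inv_mem hg, ?_⟩
    have := sum_Ioc_comp_eq (by positivity) (periodic_apply_sub_self (inv_mem hg)) hg 0 0
    simp only [zero_add, Perm.inv_def, Equiv.symm_apply_apply] at this
    rw [Perm.inv_def, ← this, sum_congr rfl fun x _ => (neg_sub (g x) x).symm, sum_neg_distrib,
      hg', neg_zero]

def fixedA0 (n : ℕ) : Subgroup (Perm ℤ) := A0 n ⊓ R0Hom.eqLocus (MonoidHom.id _)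

theorem coe_fixedA0 (n : ℕ) : (fixedA0 n : Set (Perm ℤ)) = {g | IsA0 n g ∧ R0 g = g} := rfl

instance (n : ℕ) : Nontrivial (ZMod (2 * n)) := ZMod.nontrivial_iff.2 (by omega)

section sPerm

variable {n : ℕ}

theorem two_mul_natCast_eq_zero : (2 * n : ZMod (2 * n)) = 0 := by
  exact_mod_cast ZMod.natCast_self (2 * n)

theorem intCast_eq_intCast_iff_two_mul_dvd {a b : ℤ} :
    (a : ZMod (2 * n)) = b ↔ 2 * (n : ℤ) ∣ a - b := by
  rw [ZMod.intCast_eq_intCast_iff_dvd_sub, dvd_sub_comm]; push_cast; rfl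

theorem intCast_ne_of_lt_of_lt {a b : ℤ} (h₁ : a < b) (h₂ : b < a + 2 * n) :
    (b : ZMod (2 * n)) ≠ a := by
  rw [Ne, intCast_eq_intCast_iff_two_mul_dvd]
  intro h
  have := Int.le_of_dvd (by omega) h
  omega

-- Residues are read in `ZMod (2n)`, so that case analyses on `sPerm` reduce to ring identities.
theorem sPerm_apply (i x : ℤ) : sPerm n i x =
    if (x : ZMod (2 * n)) = i then x + 1 else if (x : ZMod (2 * n)) = i + 1 then x - 1 else x := by
  have h := intCast_eq_intCast_iff_two_mul_dvd (n := n) (a := x) (b := i + 1)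
  push_cast at h
  simp only [h, intCast_eq_intCast_iff_two_mul_dvd, ← sub_sub]
  rfl

theorem sPerm_apply_self (j : ℤ) : sPerm n j j = j + 1 := by
  simp [sPerm_apply]

theorem sPerm_apply_add_one (j : ℤ) : sPerm n j (j + 1) = j := by
  simp [sPerm_apply]

theorem sPerm_apply_of_ne {j x : ℤ} (h₀ : (x : ZMod (2 * n)) ≠ j)
    (h₁ : (x : ZMod (2 * n)) ≠ j + 1) : sPerm n j x = x := by
  simp [sPerm_apply, h₀, h₁]

theorem sPerm_eq_of_intCast_eq {i j : ℤ} (h : (i : ZMod (2 * n)) = j) :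
    sPerm n i = sPerm n j := by
  ext x
  simp [sPerm_apply, h]

theorem sPerm_mem_periodicPerm (j : ℤ) : sPerm n j ∈ periodicPerm (2 * n) := by
  refine mem_periodicPerm.2 fun x => ?_
  have : ((x + 2 * n : ℤ) : ZMod (2 * n)) = x := by
    push_cast
    rw [two_mul_natCast_eq_zero, add_zero]
  simp only [sPerm_apply, this]
  split_ifs <;> ring

theorem R0_sPerm (j : ℤ) : R0 (sPerm n j) = sPerm n (2 * n - j - 2) := by
  ext x
  have h := two_mul_natCast_eq_zero (n := n)
  have h1 : (1 : ZMod (2 * n)) ≠ 0 := one_ne_zero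
  change -(sPerm n j (-x - 1)) - 1 = _
  simp only [sPerm_apply]
  push_cast
  split_ifs <;> grind

theorem sPerm_disjoint_of_lt {i k : ℤ} (h₁ : i + 1 < k) (h₂ : k + 1 < i + 2 * n) :
    (sPerm n i).Disjoint (sPerm n k) := by
  have hki : (k : ZMod (2 * n)) ≠ i := intCast_ne_of_lt_of_lt (by omega) (by omega)
  have hki₁ : ((k : ℤ) : ZMod (2 * n)) ≠ (i + 1 : ℤ) :=
    intCast_ne_of_lt_of_lt (by omega) (by omega)
  have hk₁i : ((k + 1 : ℤ) : ZMod (2 * n)) ≠ i := intCast_ne_of_lt_of_lt (by omega) (by omega)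
  have h1 : (1 : ZMod (2 * n)) ≠ 0 := one_ne_zero
  push_cast at hki₁ hk₁i
  intro x
  simp only [sPerm_apply]
  split_ifs <;> grind

theorem sum_Ioc_comp_sPerm_sub (hn : 0 < n) {F : ℤ → ℤ → ℤ}
    (hF : ∀ y x, F (y + 2 * n) (x + 2 * n) = F y x) (j : ℤ) :
    ∑ x ∈ Ioc 0 (2 * (n : ℤ)), (F (sPerm n j x) x - F x x) =
      F (j + 1) j - F j j + (F j (j + 1) - F (j + 1) (j + 1)) := by
  have hper : Function.Periodic (fun x => F (sPerm n j x) x - F x x) (2 * n) := fun x => by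
    simp only [mem_periodicPerm.1 (sPerm_mem_periodicPerm j), hF]
  have := sum_Ioc_comp_eq (by positivity) hper (one_mem _) (j - 1) 0
  simp only [Perm.coe_one, id, zero_add] at this
  rw [← this, sum_eq_add_of_mem j (j + 1) (by simp; omega) (by simp; omega) (by omega)]
  · rw [sPerm_apply_self, sPerm_apply_add_one]
  · intro x hx hne
    rw [mem_Ioc] at hx
    rw [sPerm_apply_of_ne, sub_self]
    · exact intCast_ne_of_lt_of_lt (by omega) (by omega)
    · exact_mod_cast intCast_ne_of_lt_of_lt (a := j + 1) (by omega) (by omega)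

theorem sPerm_mem_A0 (hn : 0 < n) (j : ℤ) : sPerm n j ∈ A0 n := by
  refine isA0_iff.2 ⟨sPerm_mem_periodicPerm j, ?_⟩
  simpa using sum_Ioc_comp_sPerm_sub hn (F := fun y x => y - x) (by simp) j

theorem R0_sPerm_mul_sPerm {i : ℤ} (h₀ : 0 ≤ i) (h₁ : i ≤ n - 2) :
    R0 (sPerm n i * sPerm n (2 * n - i - 2)) = sPerm n i * sPerm n (2 * n - i - 2) := by
  rw [R0_mul, R0_sPerm, R0_sPerm, show 2 * (n : ℤ) - (2 * n - i - 2) - 2 = i by ring]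
  exact (sPerm_disjoint_of_lt (by omega) (by omega)).commute.eq.symm

theorem SC_subset_fixedA0 (hn : 0 < n) : SC n ⊆ fixedA0 n := by
  rintro _ ((rfl | rfl) | ⟨i, hi₀, hi₁, rfl⟩)
  · refine ⟨sPerm_mem_A0 hn _, ?_⟩
    change R0 _ = _
    rw [R0_sPerm]
    apply sPerm_eq_of_intCast_eq
    push_cast
    linear_combination (-1 : ZMod (2 * n)) * two_mul_natCast_eq_zero
  · refine ⟨sPerm_mem_A0 hn _, ?_⟩
    change R0 _ = _
    rw [R0_sPerm]
    congr 1
    ring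
  · exact ⟨mul_mem (sPerm_mem_A0 hn _) (sPerm_mem_A0 hn _), R0_sPerm_mul_sPerm hi₀ hi₁⟩

end sPerm

noncomputable def sqDisplacement (n : ℕ) (g : Perm ℤ) : ℤ :=
  ∑ x ∈ Ioc 0 (2 * (n : ℤ)), (g x - x) ^ 2

theorem sqDisplacement_nonneg (n : ℕ) (g : Perm ℤ) : 0 ≤ sqDisplacement n g :=
  sum_nonneg fun _ _ => sq_nonneg _

section sqDisplacement

variable {n : ℕ} {g : Perm ℤ}

theorem sqDisplacement_mul_sPerm (hn : 0 < n) (hg : g ∈ periodicPerm (2 * n)) (j : ℤ) :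
    sqDisplacement n (g * sPerm n j) = sqDisplacement n g + 2 * (g (j + 1) - g j) := by
  have := sum_Ioc_comp_sPerm_sub hn (F := fun y x => (g y - x) ^ 2)
    (fun y x => by simp only [mem_periodicPerm.1 hg]; ring) j
  rw [sum_sub_distrib] at this
  simp only [sqDisplacement, Perm.mul_apply]
  linear_combination this

theorem sqDisplacement_mul_sPerm_mul_sPerm (hn : 0 < n) (hg : g ∈ periodicPerm (2 * n))
    {i k : ℤ} (hik : (sPerm n i).Disjoint (sPerm n k)) :
    sqDisplacement n (g * (sPerm n i * sPerm n k)) =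
      sqDisplacement n g + 2 * (g (i + 1) - g i) + 2 * (g (k + 1) - g k) := by
  have fix (x : ℤ) (hx : sPerm n k x ≠ x) : sPerm n i x = x := (hik x).resolve_right hx
  rw [← mul_assoc, sqDisplacement_mul_sPerm hn (mul_mem hg (sPerm_mem_periodicPerm i)),
    sqDisplacement_mul_sPerm hn hg]
  simp only [Perm.mul_apply, fix k (by rw [sPerm_apply_self]; omega),
    fix (k + 1) (by rw [sPerm_apply_add_one]; omega)]

end sqDisplacement

theorem apply_eq_add_apply_zero_of_strictMono {g : Perm ℤ} (hg : StrictMono g) (x : ℤ) :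
    g x = x + g 0 := by
  have step (y : ℤ) : g (y + 1) = g y + 1 := by
    obtain ⟨z, hz⟩ := g.surjective (g y + 1)
    have hyz : y < z := hg.lt_iff_lt.1 (by omega)
    have := hg.monotone (show y + 1 ≤ z by omega)
    have := hg (lt_add_one y)
    omega
  induction x using Int.induction_on with
  | zero => simp
  | succ k ih => rw [step, ih]; ring
  | pred k ih => have := step (-k - 1); simp only [sub_add_cancel] at this; omega

section descent

variable {n : ℕ} {g : Perm ℤ}

theorem eq_one_of_strictMono (hn : 0 < n) (hg : g ∈ A0 n) (hmono : StrictMono g) : g = 1 := by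
  have hlin := apply_eq_add_apply_zero_of_strictMono hmono
  have hsum := (isA0_iff.1 hg).2
  rw [sum_congr rfl fun x _ => by rw [hlin x, add_sub_cancel_left], sum_const, Int.card_Ioc,
    sub_zero, nsmul_eq_mul] at hsum
  have h0 : g 0 = 0 := (mul_eq_zero.1 hsum).resolve_left (by omega)
  ext x
  rw [hlin, h0, add_zero, Perm.one_apply]

theorem exists_apply_add_one_lt (hn : 0 < n) (hg : g ∈ A0 n) (h1 : g ≠ 1) :
    ∃ a : ℤ, 0 ≤ a ∧ a < 2 * n ∧ g (a + 1) < g a := by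
  have hper := apply_add_zsmul (isA0_iff.1 hg).1
  obtain ⟨j, hj⟩ : ∃ j, g (j + 1) < g j := by
    by_contra! h
    exact h1 (eq_one_of_strictMono hn hg (strictMono_int_of_lt_succ fun j =>
      (h j).lt_of_ne (g.injective.ne (by omega))))
  refine ⟨j % (2 * n), Int.emod_nonneg _ (by omega), Int.emod_lt_of_pos _ (by omega), ?_⟩
  have e₀ := hper (j % (2 * n)) (j / (2 * n))
  have e₁ := hper (j % (2 * n) + 1) (j / (2 * n))
  rw [smul_eq_mul, Int.emod_add_ediv_mul] at e₀
  rw [smul_eq_mul, add_right_comm, Int.emod_add_ediv_mul] at e₁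
  linarith

theorem apply_lt_of_mem_fixedA0 (hg : g ∈ fixedA0 n) {a : ℤ} (h : g (a + 1) < g a) :
    g (2 * n - a - 2 + 1) < g (2 * n - a - 2) := by
  have hsym := R0_eq_self_iff.1 hg.2
  have hper := mem_periodicPerm.1 (isA0_iff.1 hg.1).1
  rw [show 2 * (n : ℤ) - a - 2 + 1 = -a - 1 + 2 * n by ring,
    show 2 * (n : ℤ) - a - 2 = -(a + 1) - 1 + 2 * n by ring, hper, hper, hsym, hsym]
  linarith

theorem exists_mem_SC_sqDisplacement_lt (hn : 0 < n) (hg : g ∈ fixedA0 n) (h1 : g ≠ 1) :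
    ∃ t ∈ SC n, sqDisplacement n (g * t) < sqDisplacement n g := by
  have hper := (isA0_iff.1 hg.1).1
  obtain ⟨a, ha₀, ha, hdesc⟩ := exists_apply_add_one_lt hn hg.1 h1
  have hmirror := apply_lt_of_mem_fixedA0 hg hdesc
  have pair (i : ℤ) (hi₀ : 0 ≤ i) (hi₁ : i ≤ n - 2) (hi : g (i + 1) < g i)
      (hk : g (2 * n - i - 2 + 1) < g (2 * n - i - 2)) :
      ∃ t ∈ SC n, sqDisplacement n (g * t) < sqDisplacement n g :=
    ⟨_, Or.inr ⟨i, hi₀, hi₁, rfl⟩, by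
      rw [sqDisplacement_mul_sPerm_mul_sPerm hn hper (sPerm_disjoint_of_lt (by omega) (by omega))]
      linarith⟩
  by_cases ha₁ : a = n - 1
  · subst ha₁
    exact ⟨_, Or.inl (Or.inr rfl), by rw [sqDisplacement_mul_sPerm hn hper]; linarith⟩
  by_cases ha₂ : a = 2 * n - 1
  · subst ha₂
    exact ⟨_, Or.inl (Or.inl rfl), by rw [sqDisplacement_mul_sPerm hn hper]; linarith⟩
  by_cases ha₃ : a ≤ n - 2
  · exact pair a ha₀ ha₃ hdesc hmirror
  · refine pair (2 * n - a - 2) (by omega) (by omega) hmirror ?_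
    rwa [show 2 * (n : ℤ) - (2 * n - a - 2) - 2 = a by ring]

theorem mem_closure_SC_of_mem_fixedA0 (hn : 0 < n) (hg : g ∈ fixedA0 n) :
    g ∈ Subgroup.closure (SC n) := by
  induction hN : (sqDisplacement n g).toNat using Nat.strong_induction_on generalizing g with
  | _ N ih =>
  by_cases h1 : g = 1
  · exact h1 ▸ one_mem _
  obtain ⟨t, ht, hlt⟩ := exists_mem_SC_sqDisplacement_lt hn hg h1
  have hgt := ih _ (by have := sqDisplacement_nonneg n (g * t); omega)
    (mul_mem hg (SC_subset_fixedA0 hn ht)) rfl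
  simpa using mul_mem hgt (inv_mem (Subgroup.subset_closure ht))

end descent

theorem stmt_14 (n : ℕ) (hn : 2 ≤ n) :
    (∀ x ∈ SC n, R0 x = x) ∧
    {g : Equiv.Perm ℤ | IsA0 n g ∧ R0 g = g}
      = (Subgroup.closure (SC n) : Set (Equiv.Perm ℤ)) := by
  have hn₀ : 0 < n := by omega
  refine ⟨fun x hx => (SC_subset_fixedA0 hn₀ hx).2, ?_⟩
  rw [← coe_fixedA0]
  exact congrArg _ (le_antisymm (fun g hg => mem_closure_SC_of_mem_fixedA0 hn₀ hg)
    ((Subgroup.closure_le _).2 (SC_subset_fixedA0 hn₀)))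
end

section
/- Let f be a bounded (n,2n)-affine permutation. Then R(𝒥_f) = 𝒥_{Rf}, i.e. for every i ∈ ℤ/2n one has R((𝒥_f)_{−i}) = (𝒥_{Rf})_i. -/
/-- The value at (the residue class of) `a` of the juggling pattern `𝒥_f` associated to a
bounded `(n,2n)`-affine permutation `f`:
`(𝒥_f)_a = {a - f(b) + 2n : b < a, f(b) ≥ a}`.  (For bounded `f`, every such `b` lies in
the interval `[a - 2n, a)`.) -/
noncomputable def JPofPerm (n : ℕ) (f : ℤ → ℤ) (a : ℤ) : Finset ℕ :=
  ((Finset.Ico (a - 2*n) a).filter (fun b => a ≤ f b)).image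
    (fun b => (a - f b + 2*n).toNat)


/-!
For bounded `f`, `j ∈ (𝒥_f)_a` just says that some `b < a` is sent to `a + 2n - j`; the window
`[a - 2n, a)` of the definition is then automatic. Since `f` is a bijection, `x - a - 1` has exactly
one preimage `c`, and `x ∈ R((𝒥_f)_{-a})` says precisely that `c ≥ -a`. Under `b = -c - 1` this is
`b < a` with `(Rf)(b) = a + 2n - x`, i.e. `x ∈ (𝒥_{Rf})_a`.
-/

theorem Function.Bijective.exists_ge_iff_not_exists_lt {α β : Type*} [LinearOrder α]
    {f : α → β} (hf : Function.Bijective f) (a : α) (y : β) :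
    (∃ c, a ≤ c ∧ f c = y) ↔ ¬∃ c < a, f c = y := by
  constructor
  · rintro ⟨c, hac, rfl⟩ ⟨d, hda, hdc⟩
    exact (hf.1 hdc ▸ hda).not_ge hac
  · intro hlt
    obtain ⟨c, rfl⟩ := hf.2 y
    exact ⟨c, not_lt.1 fun hca => hlt ⟨c, hca, rfl⟩, rfl⟩

theorem mem_Rset_iff (n : ℕ) (J : Finset ℕ) (x : ℕ) :
    x ∈ Rset n J ↔ x ∈ Finset.Icc 1 (2*n) ∧ 2*n + 1 - x ∉ J := by
  simp only [Rset, Finset.mem_sdiff, Finset.mem_Icc, Finset.mem_image, not_exists, not_and]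
  refine and_congr_right fun hx => ⟨fun h hj => h _ hj (by omega), fun h j hj hjx => ?_⟩
  exact h (by rwa [← hjx, Nat.sub_sub_self (by omega)])

theorem IsBoundedAP.rperm {n : ℕ} {f : ℤ → ℤ} (hb : IsBoundedAP (2*n) f) :
    IsBoundedAP (2*n) (Rperm n f) := fun i => by
  have := hb (-i - 1)
  simp only [Rperm]
  omega

theorem mem_JPofPerm_iff {n : ℕ} {f : ℤ → ℤ} (hb : IsBoundedAP (2*n) f) (a : ℤ) (j : ℕ) :
    j ∈ JPofPerm n f a ↔ j ∈ Finset.Icc 1 (2*n) ∧ ∃ b < a, f b = a + 2*n - j := by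
  simp only [JPofPerm, Finset.mem_image, Finset.mem_filter, Finset.mem_Ico, Finset.mem_Icc]
  constructor
  · rintro ⟨b, ⟨⟨-, hba⟩, hafb⟩, rfl⟩
    have := hb b
    exact ⟨by omega, b, hba, by omega⟩
  · rintro ⟨hj, b, hba, hfb⟩
    have := hb b
    exact ⟨b, ⟨⟨by omega, hba⟩, by omega⟩, by omega⟩

theorem exists_lt_rperm_eq_iff (n : ℕ) (f : ℤ → ℤ) (a y : ℤ) :
    (∃ b < a, Rperm n f b = y) ↔ ∃ c, -a ≤ c ∧ f c = 2*n - 1 - y := by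
  constructor
  · rintro ⟨b, hba, hb⟩
    exact ⟨-b - 1, by omega, by simp only [Rperm] at hb; omega⟩
  · rintro ⟨c, hac, hc⟩
    refine ⟨-c - 1, by omega, ?_⟩
    rw [Rperm, show -(-c - 1) - 1 = c by ring]
    omega

theorem stmt_15_general (n : ℕ) (f : ℤ → ℤ)
    (hf : IsAffinePerm n (2*n) f) (hb : IsBoundedAP (2*n) f) :
    ∀ a : ℤ, Rset n (JPofPerm n f (-a)) = JPofPerm n (Rperm n f) a := by
  intro a
  ext x
  rw [mem_Rset_iff, mem_JPofPerm_iff hb, mem_JPofPerm_iff hb.rperm, exists_lt_rperm_eq_iff]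
  refine and_congr_right fun hx => ?_
  rw [Finset.mem_Icc] at hx
  have hx' : 2*n + 1 - x ∈ Finset.Icc 1 (2*n) := Finset.mem_Icc.2 (by omega)
  have hf_target : -a + 2*n - ((2*n + 1 - x : ℕ) : ℤ) = x - a - 1 := by omega
  have hRf_target : (2*n - 1 - (a + 2*n - x) : ℤ) = x - a - 1 := by ring
  rw [hf_target, hRf_target, hf.1.exists_ge_iff_not_exists_lt]
  simp only [hx', true_and]

theorem stmt_15 (n : ℕ) (hn : 0 < n) (f : ℤ → ℤ)
    (hf : IsAffinePerm n (2*n) f) (hb : IsBoundedAP (2*n) f) :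
    ∀ a : ℤ, Rset n (JPofPerm n f (-a)) = JPofPerm n (Rperm n f) a :=
  stmt_15_general n f hf hb
end

section
/- Let g ∈ A^0_{2n} and let i ∈ {0,…,2n−1} satisfy g(i) < g(i+1) (equivalently ℓ(g·s_i) = ℓ(g)+1). Then the pair (i, i+1) belongs to L(g·s_i) but not to L(g); the map ι_i, which sends (x,y) ∈ L(g) to the unique pair (x',y') with x' ∈ {0,…,2n−1}, x' ≡ s_i(x) (mod 2n), and y' = s_i(y) + (x' − s_i(x)), is a well-defined injection from L(g) into L(g·s_i); and the square commutes: Φ(ι_i(x,y)) = ι_j(Φ(x,y)) for all (x,y) ∈ L(g), where j is the element of {0,…,2n−1} with j ≡ −i−2 (mod 2n), Φ on the left being the map L(g·s_i) → L(R^0(g)·s_j) and Φ on the right the map L(g) → L(R^0(g)). -/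
/-- The map `ι_i`, sending `(x,y)` to the unique pair `(x',y')` with `x' ∈ {0,…,2n-1}`,
`x' ≡ s_i(x) (mod 2n)` and `y' = s_i(y) + (x' - s_i(x))`. -/
def iotaMap (n : ℕ) (i : ℤ) (p : ℤ × ℤ) : ℤ × ℤ :=
  (sFun n i p.1 % (2*n), sFun n i p.2 + (sFun n i p.1 % (2*n) - sFun n i p.1))

/-!
Both `ι_i` and `Φ` apply coordinatewise a map commuting with translation by `2n`
(`s_i`, resp. `z ↦ 2n - z - 1` with the coordinates swapped) and then translate the pair
diagonally by a multiple of `2n` so that its first entry lies in `[0, 2n)`. Such maps do not see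
a diagonal translation of their argument, so every composite reduces to the coordinatewise maps:
`ι_i ∘ ι_i` is the identity on normalized pairs (injectivity), and `Φ ∘ ι_i = ι_j ∘ Φ` reduces to
the pointwise identity `R⁰(s_i) = s_j`. That `ι_i` lands in `L(g s_i)` holds because `s_i` is
increasing except on the pairs it swaps, and the only swapped pair with first entry in `[0, 2n)`
is `(i, i + 1)`, which is not an inversion of `g`.
-/

theorem dvd_iff_dvd_of_dvd_add {α : Type*} [NonUnitalRing α] {a b c : α} (h : a ∣ b + c) :
    a ∣ b ↔ a ∣ c :=
  ⟨fun hb => (dvd_add_right hb).1 h, fun hc => (dvd_add_left hc).1 h⟩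

theorem apply_add_mul_of_apply_add {N : ℤ} {f : ℤ → ℤ} (hf : ∀ x, f (x + N) = f x + N)
    (x k : ℤ) : f (x + N * k) = f x + N * k := by
  have hper : Function.Periodic (fun x => f x - x) N := fun x => by
    simp only [hf]; ring
  have := hper.int_mul k x
  simp only [Int.cast_id] at this
  rw [mul_comm]
  linarith

section SimpleReflection

variable {n : ℕ} {i : ℤ}

theorem not_dvd_sub_one_of_dvd {a : ℤ} (h : 2 * (n : ℤ) ∣ a) : ¬ 2 * (n : ℤ) ∣ a - 1 := fun h' =>
  two_n_not_dvd_one n (by simpa using dvd_sub h h')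

theorem sFun_self : sFun n i i = i + 1 := by simp [sFun]

theorem sFun_add_one_self : sFun n i (i + 1) = i := by
  rw [← sFun_self, sFun_invol]

theorem sFun_le_add_one (x : ℤ) : sFun n i x ≤ x + 1 := by
  unfold sFun; split_ifs <;> omega

theorem sub_one_le_sFun (x : ℤ) : x - 1 ≤ sFun n i x := by
  unfold sFun; split_ifs <;> omega

theorem dvd_sub_of_sFun_eq_add_one {x : ℤ} (h : sFun n i x = x + 1) : 2 * (n : ℤ) ∣ x - i := by
  unfold sFun at h; split_ifs at h with h1 <;> first | exact h1 | omega

theorem sFun_injective : Function.Injective (sFun n i) :=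
  Function.Involutive.injective (sFun_invol n i)

theorem mul_sPerm_apply (g : Equiv.Perm ℤ) (x : ℤ) : (g * sPerm n i) x = g (sFun n i x) := rfl

theorem sFun_lt_sFun {x y : ℤ} (hxy : x < y) (hswap : ¬ (2 * (n : ℤ) ∣ x - i ∧ y = x + 1)) :
    sFun n i x < sFun n i y := by
  refine lt_of_not_ge fun hle => ?_
  -- `s_i` is injective and moves points by at most one, so `y = x + 1` and `s_i x = x + 1`.
  have hne : sFun n i y ≠ sFun n i x := fun h => hxy.ne' (sFun_injective h)
  have hx_le := sFun_le_add_one (n := n) (i := i) x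
  have hy_ge := sub_one_le_sFun (n := n) (i := i) y
  have hx : sFun n i x = x + 1 := by omega
  exact hswap ⟨dvd_sub_of_sFun_eq_add_one hx, by omega⟩

theorem sFun_add_mul (x k : ℤ) : sFun n i (x + 2 * n * k) = sFun n i x + 2 * n * k := by
  have hshift : ∀ a, 2 * (n : ℤ) ∣ a + 2 * n * k ↔ 2 * (n : ℤ) ∣ a := fun a =>
    dvd_add_left (dvd_mul_right _ _)
  unfold sFun
  rw [show x + 2 * n * k - i = (x - i) + 2 * n * k by ring,
    show x - i + 2 * n * k - 1 = (x - i - 1) + 2 * n * k by ring]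
  simp only [hshift]
  split_ifs <;> ring

/-- The identity `R⁰(s_i) = s_j`, evaluated at `2n - z - 1`. -/
theorem sFun_reflect {j : ℤ} (hij : 2 * (n : ℤ) ∣ j - (-i - 2)) (z : ℤ) :
    sFun n j (2 * n - z - 1) = 2 * n - sFun n i z - 1 := by
  have hA : 2 * (n : ℤ) ∣ 2 * n - z - 1 - j ↔ 2 * (n : ℤ) ∣ z - i - 1 :=
    dvd_iff_dvd_of_dvd_add (by
      rw [show 2 * n - z - 1 - j + (z - i - 1) = 2 * n * 1 - (j - (-i - 2)) by ring]
      exact dvd_sub (dvd_mul_right _ _) hij)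
  have hB : 2 * (n : ℤ) ∣ 2 * n - z - 1 - j - 1 ↔ 2 * (n : ℤ) ∣ z - i :=
    dvd_iff_dvd_of_dvd_add (by
      rw [show 2 * n - z - 1 - j - 1 + (z - i) = 2 * n * 1 - (j - (-i - 2)) by ring]
      exact dvd_sub (dvd_mul_right _ _) hij)
  unfold sFun
  have hexcl := not_dvd_sub_one_of_dvd (n := n) (a := z - i)
  simp only [hA, hB]
  split_ifs <;> first | ring1 | tauto

end SimpleReflection

section DiagonalTranslation

variable {n : ℕ}

/-- `ι_i` and `Φ` both end with this normalization of a pair. -/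
def reduceFst (n : ℕ) (p : ℤ × ℤ) : ℤ × ℤ :=
  (p.1 % (2 * n), p.2 + (p.1 % (2 * n) - p.1))

theorem reduceFst_add_mul (a b k : ℤ) :
    reduceFst n (a + 2 * n * k, b + 2 * n * k) = reduceFst n (a, b) := by
  simp only [reduceFst, Int.add_mul_emod_self_left, Prod.mk.injEq, true_and]
  ring

theorem exists_reduceFst_eq (p : ℤ × ℤ) :
    ∃ k, reduceFst n p = (p.1 + 2 * n * k, p.2 + 2 * n * k) :=
  ⟨-(p.1 / (2 * n)), by simp only [reduceFst, Int.emod_def, Prod.mk.injEq]; constructor <;> ring⟩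

theorem reduceFst_of_mem {p : ℤ × ℤ} (h0 : 0 ≤ p.1) (h1 : p.1 < 2 * n) : reduceFst n p = p := by
  simp [reduceFst, Int.emod_eq_of_lt h0 h1]

theorem apply_reduceFst {β : Type*} {F : ℤ × ℤ → β}
    (hF : ∀ a b k, F (a + 2 * n * k, b + 2 * n * k) = F (a, b)) (p : ℤ × ℤ) :
    F (reduceFst n p) = F p := by
  obtain ⟨k, hk⟩ := exists_reduceFst_eq p
  rw [hk, hF]

theorem iotaMap_eq_reduceFst (i : ℤ) (p : ℤ × ℤ) :
    iotaMap n i p = reduceFst n (sFun n i p.1, sFun n i p.2) := rfl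

theorem PhiMap_eq_reduceFst (p : ℤ × ℤ) :
    PhiMap n p = reduceFst n (2 * n - p.2 - 1, 2 * n - p.1 - 1) := rfl

theorem iotaMap_add_mul (i a b k : ℤ) :
    iotaMap n i (a + 2 * n * k, b + 2 * n * k) = iotaMap n i (a, b) := by
  simp only [iotaMap_eq_reduceFst, sFun_add_mul, reduceFst_add_mul]

theorem PhiMap_add_mul (a b k : ℤ) :
    PhiMap n (a + 2 * n * k, b + 2 * n * k) = PhiMap n (a, b) := by
  simp only [PhiMap_eq_reduceFst]
  rw [show 2 * n - (b + 2 * n * k) - 1 = (2 * n - b - 1) + 2 * n * (-k) by ring,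
    show 2 * n - (a + 2 * n * k) - 1 = (2 * n - a - 1) + 2 * n * (-k) by ring, reduceFst_add_mul]

theorem iotaMap_iotaMap (i : ℤ) {p : ℤ × ℤ} (h0 : 0 ≤ p.1) (h1 : p.1 < 2 * n) :
    iotaMap n i (iotaMap n i p) = p := by
  rw [iotaMap_eq_reduceFst i p, apply_reduceFst (iotaMap_add_mul i), iotaMap_eq_reduceFst]
  simp only [sFun_invol]
  exact reduceFst_of_mem h0 h1

theorem injOn_iotaMap (i : ℤ) (f : ℤ → ℤ) : Set.InjOn (iotaMap n i) (Lset n f) :=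
  fun p hp q hq hpq => by
    rw [← iotaMap_iotaMap i hp.1 (by linarith [hp.2.1]), hpq,
      iotaMap_iotaMap i hq.1 (by linarith [hq.2.1])]

theorem PhiMap_iotaMap {i j : ℤ} (hij : 2 * (n : ℤ) ∣ j - (-i - 2)) (p : ℤ × ℤ) :
    PhiMap n (iotaMap n i p) = iotaMap n j (PhiMap n p) := by
  rw [iotaMap_eq_reduceFst i p, apply_reduceFst PhiMap_add_mul, PhiMap_eq_reduceFst p,
    apply_reduceFst (iotaMap_add_mul j), PhiMap_eq_reduceFst, iotaMap_eq_reduceFst]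
  simp only [sFun_reflect hij]

end DiagonalTranslation

section InversionSet

variable {n : ℕ} {i : ℤ}

theorem sFun_lt_sFun_of_mem_Lset {f : ℤ → ℤ} (hi0 : 0 ≤ i) (hi1 : i ≤ 2 * (n : ℤ) - 1)
    (hlt : f i < f (i + 1)) {p : ℤ × ℤ} (hp : p ∈ Lset n f) : sFun n i p.1 < sFun n i p.2 := by
  obtain ⟨hx0, hx1, hxy, hfyx⟩ := hp
  refine sFun_lt_sFun hxy fun ⟨hdvd, hy⟩ => ?_
  have hx : p.1 = i := by
    have := Int.eq_zero_of_abs_lt_dvd hdvd (by rw [abs_lt]; omega)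
    omega
  rw [hy, hx] at hfyx
  exact lt_asymm hlt hfyx

theorem mapsTo_iotaMap {g : Equiv.Perm ℤ} (hg : ∀ x, g (x + 2 * n) = g x + 2 * n)
    (hi0 : 0 ≤ i) (hi1 : i ≤ 2 * (n : ℤ) - 1) (hlt : g i < g (i + 1)) :
    Set.MapsTo (iotaMap n i) (Lset n g) (Lset n ⇑(g * sPerm n i)) := by
  intro p hp
  have hs := sFun_lt_sFun_of_mem_Lset hi0 hi1 hlt hp
  have hN : 0 < 2 * (n : ℤ) := by linarith [hp.1, hp.2.1]
  have h0 : 0 ≤ (iotaMap n i p).1 := Int.emod_nonneg _ hN.ne'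
  have h1 : (iotaMap n i p).1 < 2 * n := Int.emod_lt_of_pos _ hN
  obtain ⟨k, hk⟩ := exists_reduceFst_eq (n := n) (sFun n i p.1, sFun n i p.2)
  rw [iotaMap_eq_reduceFst, hk] at h0 h1 ⊢
  dsimp only at h0 h1 ⊢
  refine ⟨h0, by omega, by linarith, ?_⟩
  simp only [mul_sPerm_apply, sFun_add_mul, sFun_invol, apply_add_mul_of_apply_add hg]
  linarith [hp.2.2.2]

end InversionSet

theorem stmt_16_general (n : ℕ) (g : Equiv.Perm ℤ) (hg : IsA0 n g)
    (i : ℤ) (hi0 : 0 ≤ i) (hi1 : i ≤ 2*(n:ℤ) - 1) (hlt : g i < g (i + 1)) :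
    ((i, i + 1) ∈ Lset n ⇑(g * sPerm n i) ∧ (i, i + 1) ∉ Lset n ⇑g)
    ∧ Set.MapsTo (iotaMap n i) (Lset n ⇑g) (Lset n ⇑(g * sPerm n i))
    ∧ Set.InjOn (iotaMap n i) (Lset n ⇑g)
    ∧ ∀ j : ℤ, 0 ≤ j → j ≤ 2*(n:ℤ) - 1 → (2*(n:ℤ)) ∣ (j - (-i - 2)) →
        ∀ p ∈ Lset n ⇑g,
          PhiMap n (iotaMap n i p) = iotaMap n j (PhiMap n p) := by
  have hswap : (g * sPerm n i) (i + 1) < (g * sPerm n i) i := by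
    simpa only [mul_sPerm_apply, sFun_self, sFun_add_one_self] using hlt
  exact ⟨⟨⟨hi0, hi1, lt_add_one i, hswap⟩, fun h => lt_asymm hlt h.2.2.2⟩,
    mapsTo_iotaMap hg.1 hi0 hi1 hlt, injOn_iotaMap i g, fun j _ _ hij p _ => PhiMap_iotaMap hij p⟩

theorem stmt_16 (n : ℕ) (hn : 0 < n) (g : Equiv.Perm ℤ) (hg : IsA0 n g)
    (i : ℤ) (hi0 : 0 ≤ i) (hi1 : i ≤ 2*(n:ℤ) - 1) (hlt : g i < g (i + 1)) :
    ((i, i + 1) ∈ Lset n ⇑(g * sPerm n i) ∧ (i, i + 1) ∉ Lset n ⇑g)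
    ∧ Set.MapsTo (iotaMap n i) (Lset n ⇑g) (Lset n ⇑(g * sPerm n i))
    ∧ Set.InjOn (iotaMap n i) (Lset n ⇑g)
    ∧ ∀ j : ℤ, 0 ≤ j → j ≤ 2*(n:ℤ) - 1 → (2*(n:ℤ)) ∣ (j - (-i - 2)) →
        ∀ p ∈ Lset n ⇑g,
          PhiMap n (iotaMap n i p) = iotaMap n j (PhiMap n p) :=
  stmt_16_general n g hg i hi0 hi1 hlt
end

section
/- Let J ⊆ {0,…,2n−1} with |J| = n, and define f : ℤ → ℤ by f(i) = i + 2n if the residue of i modulo 2n lies in J, and f(i) = i otherwise. Then f is a bounded (n,2n)-affine permutation and ℓ(f) = n². -/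
private lemma aux_mod_small (a m : ℤ) (h1 : 0 ≤ a) (h2 : a < m) : a % m = a :=
  Int.emod_eq_of_lt h1 h2

private lemma aux_mod_zero (m d : ℤ) (hm : 0 < m) (h1 : -m < d) (h2 : d < m)
    (h : d % m = 0) : d = 0 := by
  obtain ⟨k, hk⟩ := Int.dvd_of_emod_eq_zero h
  rcases lt_trichotomy k 0 with hk0 | hk0 | hk0
  · nlinarith
  · simp [hk, hk0]
  · nlinarith

theorem stmt_19 (n : ℕ) (hn : 0 < n) (J : Finset ℕ)
    (hJ : J ⊆ Finset.range (2*n)) (hcard : J.card = n) (f : ℤ → ℤ)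
    (hf : ∀ i : ℤ, f i = if (i % (2*(n:ℤ))).toNat ∈ J then i + 2*n else i) :
    (IsAffinePerm n (2*n) f ∧ IsBoundedAP (2*n) f) ∧ (Lset n f).ncard = n^2 := by
  set m : ℤ := 2*(n:ℤ) with hm
  have hm0 : 0 < m := by positivity
  have hmodlt : ∀ i : ℤ, i % m < m := fun i => Int.emod_lt_of_pos i hm0
  have hmodnn : ∀ i : ℤ, 0 ≤ i % m := fun i => Int.emod_nonneg i (by omega)
  have haddmod : ∀ i : ℤ, (i + m) % m = i % m := by
    intro i
    rw [Int.add_emod, Int.emod_self, add_zero, Int.emod_emod_of_dvd _ dvd_rfl]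
  have hsubmod : ∀ i : ℤ, (i - m) % m = i % m := by
    intro i
    have := haddmod (i - m)
    simpa using this
  -- Periodicity
  have hper : ∀ i : ℤ, f (i + m) = f i + m := by
    intro i
    rw [hf (i + m), hf i, haddmod]
    split <;> ring
  -- Bijectivity
  have hbij : Function.Bijective f := by
    set g : ℤ → ℤ := fun i => if (i % m).toNat ∈ J then i - m else i with hg
    have hfg : Function.LeftInverse g f := by
      intro i
      rw [hf i]
      by_cases h : (i % m).toNat ∈ J
      · simp only [h, if_true, hg, haddmod, h, if_true]
        ring
      · simp only [h, if_false, hg, if_neg h]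
    have hgf : Function.RightInverse g f := by
      intro i
      rw [hg]
      by_cases h : (i % m).toNat ∈ J
      · simp only [h, if_true, hf (i - m), hsubmod, h, if_true]
        ring
      · simp only [h, if_false, hf i, if_neg h]
    exact ⟨hfg.injective, hgf.surjective⟩
  -- Boundedness
  have hbdd : IsBoundedAP (2*n) f := by
    intro i
    rw [hf i]
    constructor
    · split <;> push_cast <;> omega
    · split <;> push_cast <;> omega
  -- the sum
  have hsum : (∑ i ∈ Finset.Icc (1 : ℤ) ((2*n : ℕ) : ℤ), (f i - i)) = (n : ℤ) * (2*n : ℕ) := by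
    have hterm : ∀ i : ℤ, f i - i = if (i % m).toNat ∈ J then m else 0 := by
      intro i; rw [hf i]; split <;> ring
    have hcast : ((2*n : ℕ) : ℤ) = m := by push_cast [hm]; ring
    rw [hcast]
    have := Finset.sum_nbij' (s := Finset.Icc (1 : ℤ) m) (t := Finset.range (2*n))
      (f := fun i => f i - i) (g := fun j => if j ∈ J then m else 0)
      (i := fun a => (a % m).toNat) (j := fun b => if b = 0 then m else (b : ℤ))
      (by
        intro a ha
        simp only [Finset.mem_Icc] at ha
        simp only [Finset.mem_range]
        have := hmodlt a; have := hmodnn a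
        omega)
      (by
        intro b hb
        simp only [Finset.mem_range] at hb
        simp only [Finset.mem_Icc]
        split <;> omega)
      (by
        intro a ha
        simp only [Finset.mem_Icc] at ha
        have h1 : a % m < m := hmodlt a
        have h2 : 0 ≤ a % m := hmodnn a
        by_cases hc : a = m
        · have : a % m = 0 := by rw [hc]; exact Int.emod_self
          simp [this, hc]
        · have : a % m = a := aux_mod_small a m (by omega) (by omega)
          simp only [this]
          split <;> omega)
      (by
        intro b hb
        simp only [Finset.mem_range] at hb
        by_cases hc : b = 0
        · simp [hc, Int.emod_self]
        · simp only [hc, if_false]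
          have : (b : ℤ) % m = (b : ℤ) := aux_mod_small _ _ (by positivity) (by push_cast [hm]; omega)
          rw [this]
          simp)
      (by
        intro a ha
        exact hterm a)
    rw [this]
    have hfilter : Finset.filter (fun j => j ∈ J) (Finset.range (2*n)) = J := by
      ext j
      simp only [Finset.mem_filter, Finset.mem_range]
      constructor
      · exact fun h => h.2
      · intro h
        exact ⟨by have := hJ h; simpa using this, h⟩
    rw [← Finset.sum_filter, hfilter, Finset.sum_const, hcard]
    push_cast [hm]
    ring
  -- characterization of the inversion set
  have hchar : ∀ x y : ℤ, (x, y) ∈ Lset n f ↔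
      (0 ≤ x ∧ x < m ∧ x.toNat ∈ J ∧ x < y ∧ y < x + m ∧ (y % m).toNat ∉ J) := by
    intro x y
    simp only [Lset, Set.mem_setOf_eq]
    constructor
    · rintro ⟨h0, h1, h2, h3⟩
      have hxm : x < m := by rw [hm]; omega
      have hxmod : x % m = x := aux_mod_small x m h0 hxm
      rw [hf x, hf y, hxmod] at h3
      by_cases hx : x.toNat ∈ J
      · refine ⟨h0, hxm, hx, h2, ?_, ?_⟩
        · rw [if_pos hx] at h3
          split at h3 <;> omega
        · intro hy
          rw [if_pos hx, if_pos hy] at h3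
          omega
      · exfalso
        rw [if_neg hx] at h3
        split at h3 <;> omega
    · rintro ⟨h0, h1, h2, h3, h4, h5⟩
      have hxmod : x % m = x := aux_mod_small x m h0 h1
      refine ⟨h0, by rw [← hm]; omega, h3, ?_⟩
      rw [hf x, hf y, hxmod, if_pos h2, if_neg h5]
      omega
  -- the inversion set as a finset
  set S : Finset (ℤ × ℤ) :=
    (J ×ˢ (Finset.range (2*n) \ J)).image
      (fun p => ((p.1 : ℤ), (p.1 : ℤ) + (((p.2 : ℤ) - (p.1 : ℤ)) % m))) with hS
  have hLS : Lset n f = ↑S := by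
    ext ⟨x, y⟩
    rw [hchar x y]
    simp only [hS, Finset.coe_image, Set.mem_image, Finset.mem_coe, Finset.mem_product,
      Finset.mem_sdiff, Finset.mem_range, Prod.exists]
    constructor
    · rintro ⟨h0, h1, h2, h3, h4, h5⟩
      refine ⟨x.toNat, (y % m).toNat, ⟨h2, ⟨?_, h5⟩⟩, ?_⟩
      · have := hmodlt y; have := hmodnn y
        omega
      · have hc1 : ((x.toNat : ℤ)) = x := Int.toNat_of_nonneg h0
        have hc2 : (((y % m).toNat : ℤ)) = y % m := Int.toNat_of_nonneg (hmodnn y)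
        have key : (y % m - x) % m = y - x := by
          rw [Int.sub_emod, Int.emod_emod_of_dvd _ dvd_rfl, ← Int.sub_emod]
          exact aux_mod_small _ _ (by omega) (by omega)
        simp only [hc1, hc2, Prod.mk.injEq, key]
        refine ⟨by trivial, by omega⟩
    · rintro ⟨a, b, ⟨haJ, hbr, hbJ⟩, heq⟩
      rw [Prod.ext_iff] at heq
      obtain ⟨hx', hy'⟩ := heq
      have hx : x = (a : ℤ) := hx'.symm
      have hy : y = (a : ℤ) + (((b : ℤ) - (a : ℤ)) % m) := hy'.symm
      have ha2n : a < 2*n := by have := hJ haJ; simpa using this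
      have hab : a ≠ b := fun h => hbJ (h ▸ haJ)
      have hmodpos : 0 < ((b : ℤ) - (a : ℤ)) % m := by
        rcases lt_or_eq_of_le (hmodnn ((b : ℤ) - (a : ℤ))) with h | h
        · exact h
        · exfalso
          have : (b : ℤ) - (a : ℤ) = 0 :=
            aux_mod_zero m _ hm0 (by push_cast [hm]; omega) (by push_cast [hm]; omega) h.symm
          have : (a : ℤ) = (b : ℤ) := by omega
          exact hab (by exact_mod_cast this)
      have hymod : y % m = (b : ℤ) := by
        rw [hy, Int.add_emod, Int.emod_emod_of_dvd _ dvd_rfl, ← Int.add_emod]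
        have : (a : ℤ) + ((b : ℤ) - (a : ℤ)) = (b : ℤ) := by ring
        rw [this]
        exact aux_mod_small _ _ (by positivity) (by push_cast [hm]; omega)
      refine ⟨by rw [hx]; positivity, by rw [hx]; push_cast [hm]; omega,
        by rw [hx]; simpa using haJ, by rw [hx, hy]; omega,
        by rw [hx, hy]; have := hmodlt ((b : ℤ) - (a : ℤ)); omega, ?_⟩
      rw [hymod]
      simpa using hbJ
  -- cardinality
  have hcardS : S.card = n * n := by
    have hinj : Set.InjOn (fun p : ℕ × ℕ => ((p.1 : ℤ), (p.1 : ℤ) + (((p.2 : ℤ) - (p.1 : ℤ)) % m)))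
        ↑(J ×ˢ (Finset.range (2*n) \ J)) := by
      rintro ⟨a, b⟩ hab ⟨a', b'⟩ hab' heq
      simp only [Finset.mem_coe, Finset.mem_product, Finset.mem_sdiff, Finset.mem_range] at hab hab'
      simp only [Prod.mk.injEq] at heq
      obtain ⟨h1, h2⟩ := heq
      have haa : a = a' := by exact_mod_cast h1
      subst haa
      have h2' : ((b : ℤ) - (a : ℤ)) % m = ((b' : ℤ) - (a : ℤ)) % m := by omega
      have hdvd : (((b : ℤ) - (a : ℤ)) - ((b' : ℤ) - (a : ℤ))) % m = 0 := by
        rw [Int.sub_emod, h2']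
        simp
      have hb2n : b < 2*n := hab.2.1
      have hb'2n : b' < 2*n := hab'.2.1
      have : ((b : ℤ) - (a : ℤ)) - ((b' : ℤ) - (a : ℤ)) = 0 :=
        aux_mod_zero m _ hm0 (by push_cast [hm]; omega) (by push_cast [hm]; omega) hdvd
      have : (b : ℤ) = (b' : ℤ) := by omega
      have : b = b' := by exact_mod_cast this
      simp [this]
    have h2n : 2*n - n = n := by omega
    rw [hS, Finset.card_image_of_injOn hinj, Finset.card_product, hcard,
      Finset.card_sdiff_of_subset hJ, Finset.card_range, hcard, h2n]
  refine ⟨⟨⟨hbij, ?_, ?_⟩, hbdd⟩, ?_⟩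
  · intro i
    have : ((2*n : ℕ) : ℤ) = m := by push_cast [hm]; ring
    rw [this]
    exact hper i
  · exact hsum
  · rw [hLS, Set.ncard_coe_finset, hcardS]
    ring
end
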